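/- arXiv:cond-mat/0303518 — 6 statements merged into one kernel-verified Lean document; each statement's English description precedes it below -/
import Mathlib

section
/- Fix β > 0 and a sequence ε : ℕ → ℝ such that the family (exp(−β·εₘ))ₘ is summable, and let F(μ) = ∑ₘ (1 + exp(β(εₘ − μ)))⁻¹. Then F(μ) → 0 as μ → −∞, F(μ) → +∞ as μ → +∞, and consequently for every real N > 0 there exists a unique μ ∈ ℝ with F(μ) = N. -/
/-!
Each Fermi–Dirac occupation `(1 + exp (β (εᵢ - μ)))⁻¹` lies in `(0, 1)`, increases strictly in `μ`
and is dominated by the Boltzmann weight `exp (β μ) exp (-β εᵢ)`. The summable Boltzmann bound makes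
the particle number finite, continuous (locally uniform convergence), and `O(exp (β μ))` as
`μ → -∞`; as `μ → +∞` every occupation tends to `1`, so with infinitely many levels the particle
number is unbounded. Existence of the chemical potential is then the intermediate value theorem
and uniqueness is strict monotonicity.
-/

open Real Filter Topology

namespace FermiDirac

variable {ι : Type*} {β : ℝ} {ε : ι → ℝ}

noncomputable def particleNumber (β : ℝ) (ε : ι → ℝ) (μ : ℝ) : ℝ :=
  ∑' i, (1 + exp (β * (ε i - μ)))⁻¹

lemma occupation_pos (β e μ : ℝ) : 0 < (1 + exp (β * (e - μ)))⁻¹ := by positivity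

lemma occupation_le_boltzmann (β e μ : ℝ) :
    (1 + exp (β * (e - μ)))⁻¹ ≤ exp (β * μ) * exp (-β * e) :=
  calc (1 + exp (β * (e - μ)))⁻¹ ≤ (exp (β * (e - μ)))⁻¹ :=
        inv_anti₀ (exp_pos _) (le_add_of_nonneg_left zero_le_one)
    _ = exp (β * μ) * exp (-β * e) := by rw [← exp_neg, ← exp_add]; ring_nf

lemma strictMono_occupation (hβ : 0 < β) (e : ℝ) :
    StrictMono fun μ => (1 + exp (β * (e - μ)))⁻¹ := by
  intro μ ν hμν
  apply inv_strictAnti₀ (by positivity)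
  gcongr

lemma tendsto_occupation_atTop (hβ : 0 < β) (e : ℝ) :
    Tendsto (fun μ => (1 + exp (β * (e - μ)))⁻¹) atTop (𝓝 1) := by
  have hexp : Tendsto (fun μ => exp (β * (e - μ))) atTop (𝓝 0) :=
    have hgap : Tendsto (fun μ : ℝ => e - μ) atTop atBot := by
      simpa [sub_eq_add_neg] using tendsto_atBot_add_const_left atTop e tendsto_neg_atTop_atBot
    tendsto_exp_atBot.comp (hgap.const_mul_atBot hβ)
  simpa using (hexp.const_add 1).inv₀ (by norm_num)

lemma continuous_occupation (β e : ℝ) : Continuous fun μ => (1 + exp (β * (e - μ)))⁻¹ :=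
  (by fun_prop : Continuous fun μ => 1 + exp (β * (e - μ))).inv₀ fun μ => by positivity

lemma particleNumber_nonneg (β : ℝ) (ε : ι → ℝ) (μ : ℝ) : 0 ≤ particleNumber β ε μ :=
  tsum_nonneg fun i => (occupation_pos β (ε i) μ).le

lemma summable_occupation (hsum : Summable fun i => exp (-β * ε i)) (μ : ℝ) :
    Summable fun i => (1 + exp (β * (ε i - μ)))⁻¹ :=
  (hsum.mul_left _).of_nonneg_of_le (fun i => (occupation_pos β (ε i) μ).le)
    (fun i => occupation_le_boltzmann β (ε i) μ)

lemma particleNumber_le_boltzmann (hsum : Summable fun i => exp (-β * ε i)) (μ : ℝ) :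
    particleNumber β ε μ ≤ exp (β * μ) * ∑' i, exp (-β * ε i) :=
  calc particleNumber β ε μ ≤ ∑' i, exp (β * μ) * exp (-β * ε i) :=
        (summable_occupation hsum μ).tsum_le_tsum (fun i => occupation_le_boltzmann β (ε i) μ)
          (hsum.mul_left _)
    _ = exp (β * μ) * ∑' i, exp (-β * ε i) := tsum_mul_left

lemma tendsto_particleNumber_atBot (hβ : 0 < β) (hsum : Summable fun i => exp (-β * ε i)) :
    Tendsto (particleNumber β ε) atBot (𝓝 0) := by
  have hbound : Tendsto (fun μ => exp (β * μ) * ∑' i, exp (-β * ε i)) atBot (𝓝 0) := by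
    simpa using (tendsto_exp_atBot.comp (tendsto_id.const_mul_atBot hβ)).mul_const
      (∑' i, exp (-β * ε i))
  exact squeeze_zero (particleNumber_nonneg β ε) (particleNumber_le_boltzmann hsum) hbound

lemma tendsto_particleNumber_atTop [Infinite ι] (hβ : 0 < β)
    (hsum : Summable fun i => exp (-β * ε i)) :
    Tendsto (particleNumber β ε) atTop atTop := by
  refine tendsto_atTop.2 fun b => ?_
  obtain ⟨n, hn⟩ := exists_nat_gt b
  obtain ⟨s, rfl⟩ := Infinite.exists_subset_card_eq ι n
  have hfinite : Tendsto (fun μ => ∑ i ∈ s, (1 + exp (β * (ε i - μ)))⁻¹) atTop (𝓝 s.card) := by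
    simpa using tendsto_finsetSum s fun i _ => tendsto_occupation_atTop hβ (ε i)
  filter_upwards [hfinite.eventually (eventually_ge_nhds hn)] with μ hμ
  exact hμ.trans <| (summable_occupation hsum μ).sum_le_tsum s
    fun i _ => (occupation_pos β (ε i) μ).le

lemma strictMono_particleNumber [Nonempty ι] (hβ : 0 < β)
    (hsum : Summable fun i => exp (-β * ε i)) :
    StrictMono (particleNumber β ε) := fun μ ν hμν =>
  Summable.tsum_lt_tsum (i := Classical.arbitrary ι)
    (fun i => (strictMono_occupation hβ (ε i)).monotone hμν.le)
    (strictMono_occupation hβ _ hμν) (summable_occupation hsum μ) (summable_occupation hsum ν)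

lemma continuous_particleNumber (hβ : 0 ≤ β) (hsum : Summable fun i => exp (-β * ε i)) :
    Continuous (particleNumber β ε) := by
  refine continuous_iff_continuousAt.2 fun μ₀ => ?_
  refine ContinuousOn.continuousAt ?_ (Iio_mem_nhds (lt_add_one μ₀))
  refine continuousOn_tsum (fun i => (continuous_occupation β (ε i)).continuousOn)
    (hsum.mul_left (exp (β * (μ₀ + 1)))) fun i μ hμ => ?_
  rw [norm_of_nonneg (occupation_pos β (ε i) μ).le]
  refine (occupation_le_boltzmann β (ε i) μ).trans ?_
  gcongr
  exact hμ.le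

end FermiDirac

open FermiDirac

/-- For `β > 0` and energies `ε : ℕ → ℝ` with `∑ₘ exp (-β * ε m) < ∞`, the
particle-number function `F μ = ∑ₘ (1 + exp (β * (ε m - μ)))⁻¹` tends to `0` as `μ → -∞`,
tends to `+∞` as `μ → +∞`, and for every `N > 0` there is a unique `μ` with `F μ = N`. -/
theorem fermi_dirac_chemical_potential_exists_unique
    (β : ℝ) (hβ : 0 < β) (ε : ℕ → ℝ)
    (hsum : Summable fun m => Real.exp (-β * ε m))
    (F : ℝ → ℝ) (hF : F = fun μ => ∑' m, (1 + Real.exp (β * (ε m - μ)))⁻¹) :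
    Tendsto F atBot (nhds 0) ∧
    Tendsto F atTop atTop ∧
    ∀ N : ℝ, 0 < N → ∃! μ : ℝ, F μ = N := by
  obtain rfl : F = particleNumber β ε := hF
  have hbot := tendsto_particleNumber_atBot hβ hsum
  have htop := tendsto_particleNumber_atTop hβ hsum
  refine ⟨hbot, htop, fun N hN => ?_⟩
  obtain ⟨a, ha⟩ := (hbot.eventually (eventually_le_nhds hN)).exists
  obtain ⟨b, hb⟩ := (htop.eventually_ge_atTop N).exists
  obtain ⟨μ, hμ⟩ := mem_range_of_exists_le_of_exists_ge (continuous_particleNumber hβ.le hsum)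
    ⟨a, ha⟩ ⟨b, hb⟩
  exact ⟨μ, hμ, fun ν hν => (strictMono_particleNumber hβ hsum).injective (hν.trans hμ.symm)⟩
end

section
/- Let 𝓗 be a complex Hilbert space, let H₀ and V be bounded self-adjoint operators on 𝓗, let a ∈ ℝ be such that A = H₀ + a·Id is a positive invertible operator, and suppose ‖V ∘ A⁻¹‖ ≤ γ for some γ ≥ 0. Let λ ≥ 0, and let η be a unit vector with H₀ η = ε·η for some ε ∈ ℝ. Then Re⟨η, (H₀ + λV) η⟩ ≤ (1 + λγ)·ε + λ·a·γ. -/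
open ContinuousLinearMap RCLike

open scoped InnerProductSpace

section UnitEigenvector

variable {𝕜 E : Type*} [RCLike 𝕜] [NormedAddCommGroup E] [InnerProductSpace 𝕜 E]
  {x : E} (hx : ‖x‖ = 1)
include hx

theorem re_inner_apply_eq_of_apply_eq_smul {T : E →L[𝕜] E} {c : ℝ} (hTx : T x = (c : 𝕜) • x) :
    re ⟪x, T x⟫_𝕜 = c := by
  rw [hTx, inner_smul_right, inner_self_eq_norm_sq_to_K, hx]
  simp

theorem re_inner_apply_le_opNorm (T : E →L[𝕜] E) : re ⟪x, T x⟫_𝕜 ≤ ‖T‖ :=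
  calc re ⟪x, T x⟫_𝕜 ≤ ‖x‖ * ‖T x‖ := re_inner_le_norm _ _
    _ ≤ ‖x‖ * (‖T‖ * ‖x‖) := by gcongr; exact T.le_opNorm x
    _ = ‖T‖ := by rw [hx, one_mul, mul_one]

/-- Since `x = B (A x) = c • B x`, the form of `V` at `x` is `c` times that of `V ∘ B`. -/
theorem re_inner_apply_le_mul_opNorm_comp {A B : E →L[𝕜] E} (hBA : B ∘L A = 1) {c : ℝ}
    (hc : 0 ≤ c) (hAx : A x = (c : 𝕜) • x) (V : E →L[𝕜] E) :
    re ⟪x, V x⟫_𝕜 ≤ c * ‖V ∘L B‖ := by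
  have hxB : x = (c : 𝕜) • B x := by
    simpa [hAx] using (congrArg (· x) hBA).symm
  have hVx : V x = (c : 𝕜) • (V ∘L B) x := by
    rw [comp_apply, ← map_smul, ← hxB]
  rw [hVx, inner_smul_right, re_ofReal_mul]
  exact mul_le_mul_of_nonneg_left (re_inner_apply_le_opNorm hx _) hc

end UnitEigenvector

theorem eigenvector_quadratic_form_bound_unperturbed_general
    {𝓗 : Type*} [NormedAddCommGroup 𝓗] [InnerProductSpace ℂ 𝓗]
    (H₀ V : 𝓗 →L[ℂ] 𝓗)
    (a : ℝ)
    (hpos : ∀ ψ : 𝓗, 0 ≤ (inner ℂ ψ ((H₀ + (a : ℂ) • (1 : 𝓗 →L[ℂ] 𝓗)) ψ) : ℂ).re)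
    (Ainv : 𝓗 →L[ℂ] 𝓗)
    (hinv₂ : Ainv ∘L (H₀ + (a : ℂ) • (1 : 𝓗 →L[ℂ] 𝓗)) = 1)
    (γ : ℝ) (hVA : ‖V ∘L Ainv‖ ≤ γ)
    (lam : ℝ) (hlam : 0 ≤ lam)
    (η : 𝓗) (hη : ‖η‖ = 1) (ε : ℝ) (heig : H₀ η = (ε : ℂ) • η) :
    (inner ℂ η ((H₀ + (lam : ℂ) • V) η) : ℂ).re ≤ (1 + lam * γ) * ε + lam * a * γ := by
  have hAη : (H₀ + (a : ℂ) • (1 : 𝓗 →L[ℂ] 𝓗)) η = ((ε + a : ℝ) : ℂ) • η := by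
    simp [heig, add_smul]
  have hεa : 0 ≤ ε + a := by
    have h := re_inner_apply_eq_of_apply_eq_smul (c := ε + a) hη hAη
    rw [re_to_complex] at h
    exact h ▸ hpos η
  have hVη : re ⟪η, V η⟫_ℂ ≤ (ε + a) * γ :=
    (re_inner_apply_le_mul_opNorm_comp hη hinv₂ hεa hAη V).trans (by gcongr)
  calc (inner ℂ η ((H₀ + (lam : ℂ) • V) η) : ℂ).re
      = re ⟪η, H₀ η⟫_ℂ + lam * re ⟪η, V η⟫_ℂ := by simp
    _ ≤ ε + lam * ((ε + a) * γ) := by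
        rw [re_inner_apply_eq_of_apply_eq_smul hη heig]; gcongr
    _ = (1 + lam * γ) * ε + lam * a * γ := by ring

/-- If `H₀`, `V` are bounded self-adjoint operators on a complex Hilbert
space, `A = H₀ + a • 1` is positive and invertible (with inverse `Ainv`), `‖V ∘ A⁻¹‖ ≤ γ`,
`λ ≥ 0`, and `η` is a unit eigenvector of `H₀` with eigenvalue `ε`, then
`Re ⟪η, (H₀ + λ V) η⟫ ≤ (1 + λγ) ε + λ a γ`. -/
theorem eigenvector_quadratic_form_bound_unperturbed
    {𝓗 : Type*} [NormedAddCommGroup 𝓗] [InnerProductSpace ℂ 𝓗] [CompleteSpace 𝓗]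
    (H₀ V : 𝓗 →L[ℂ] 𝓗) (hH₀ : IsSelfAdjoint H₀) (hV : IsSelfAdjoint V)
    (a : ℝ)
    (hpos : ∀ ψ : 𝓗, 0 ≤ (inner ℂ ψ ((H₀ + (a : ℂ) • (1 : 𝓗 →L[ℂ] 𝓗)) ψ) : ℂ).re)
    (Ainv : 𝓗 →L[ℂ] 𝓗)
    (hinv₁ : (H₀ + (a : ℂ) • (1 : 𝓗 →L[ℂ] 𝓗)) ∘L Ainv = 1)
    (hinv₂ : Ainv ∘L (H₀ + (a : ℂ) • (1 : 𝓗 →L[ℂ] 𝓗)) = 1)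
    (γ : ℝ) (hγ : 0 ≤ γ) (hVA : ‖V ∘L Ainv‖ ≤ γ)
    (lam : ℝ) (hlam : 0 ≤ lam)
    (η : 𝓗) (hη : ‖η‖ = 1) (ε : ℝ) (heig : H₀ η = (ε : ℂ) • η) :
    (inner ℂ η ((H₀ + (lam : ℂ) • V) η) : ℂ).re ≤ (1 + lam * γ) * ε + lam * a * γ :=
  eigenvector_quadratic_form_bound_unperturbed_general H₀ V a hpos Ainv hinv₂ γ hVA lam hlam η hη ε
    heig
end

section
/- Let 𝓗 be a complex Hilbert space, let H₀ and V be bounded self-adjoint operators on 𝓗, let a ∈ ℝ be such that A = H₀ + a·Id is a positive invertible operator, and suppose ‖V ∘ A⁻¹‖ ≤ γ with λγ < 1 for some λ ≥ 0, γ ≥ 0. Let η be a unit vector with (H₀ + λV) η = ε·η for some ε ∈ ℝ satisfying ε + a ≥ 0. Then ⟨η, (H₀ + a·Id) η⟩ ≤ (ε + a)/(1 − λγ). -/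
open ContinuousLinearMap

/-! The equation `(H₀ + λV)η = εη` rewritten for `A = H₀ + a` reads `(1 + λVA⁻¹)(Aη) = (ε + a)η`.
Since `‖λVA⁻¹‖ ≤ λγ < 1`, this forces `‖Aη‖ ≤ (ε + a)/(1 - λγ)`, and `⟪η, Aη⟫ ≤ ‖Aη‖`
for a unit vector `η`. -/

section

variable {𝕜 E : Type*} [RCLike 𝕜] [NormedAddCommGroup E] [NormedSpace 𝕜 E]

theorem shift_apply_add_smul_comp_inv_apply_eq {H₀ V Ainv : E →L[𝕜] E} {a lam ε : 𝕜} {η : E}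
    (hinv : Ainv ∘L (H₀ + a • 1) = 1) (heig : (H₀ + lam • V) η = ε • η) :
    (H₀ + a • 1) η + lam • (V ∘L Ainv) ((H₀ + a • 1) η) = (ε + a) • η := by
  have hAinv : Ainv ((H₀ + a • 1) η) = η := by
    simpa using DFunLike.congr_fun hinv η
  rw [comp_apply, hAinv, add_smul, ← heig]
  simp only [add_apply, smul_apply, one_apply_eq_self]
  abel

theorem norm_le_div_of_add_smul_apply_eq {W : E →L[𝕜] E} {μ : 𝕜} {γ : ℝ} {y z : E}
    (hW : ‖W‖ ≤ γ) (hμγ : ‖μ‖ * γ < 1) (h : y + μ • W y = z) :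
    ‖y‖ ≤ ‖z‖ / (1 - ‖μ‖ * γ) := by
  have hWy : ‖μ • W y‖ ≤ ‖μ‖ * γ * ‖y‖ := by
    rw [norm_smul, mul_assoc]
    gcongr
    exact W.le_of_opNorm_le hW y
  have hy : ‖y‖ ≤ ‖z‖ + ‖μ‖ * γ * ‖y‖ := by
    calc ‖y‖ = ‖z - μ • W y‖ := by rw [← h, add_sub_cancel_right]
      _ ≤ ‖z‖ + ‖μ • W y‖ := norm_sub_le _ _
      _ ≤ ‖z‖ + ‖μ‖ * γ * ‖y‖ := by gcongr
  rw [le_div_iff₀ (sub_pos.2 hμγ)]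
  linarith

end

theorem eigenvector_quadratic_form_bound_perturbed_general
    {𝓗 : Type*} [NormedAddCommGroup 𝓗] [InnerProductSpace ℂ 𝓗]
    (H₀ V : 𝓗 →L[ℂ] 𝓗)
    (a : ℝ)
    (Ainv : 𝓗 →L[ℂ] 𝓗)
    (hinv₂ : Ainv ∘L (H₀ + (a : ℂ) • (1 : 𝓗 →L[ℂ] 𝓗)) = 1)
    (γ : ℝ) (hVA : ‖V ∘L Ainv‖ ≤ γ)
    (lam : ℝ) (hlam : 0 ≤ lam) (hlamγ : lam * γ < 1)
    (η : 𝓗) (hη : ‖η‖ = 1) (ε : ℝ)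
    (heig : (H₀ + (lam : ℂ) • V) η = (ε : ℂ) • η) (hεa : 0 ≤ ε + a) :
    (inner ℂ η ((H₀ + (a : ℂ) • (1 : 𝓗 →L[ℂ] 𝓗)) η) : ℂ).re ≤ (ε + a) / (1 - lam * γ) := by
  have hnorm_lam : ‖(lam : ℂ)‖ = lam := by
    rw [Complex.norm_real, Real.norm_of_nonneg hlam]
  have hnorm_rhs : ‖((ε : ℂ) + a) • η‖ = ε + a := by
    rw [norm_smul, hη, mul_one, ← Complex.ofReal_add, Complex.norm_real,
      Real.norm_of_nonneg hεa]
  have hAη := norm_le_div_of_add_smul_apply_eq hVA (by rwa [hnorm_lam])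
    (shift_apply_add_smul_comp_inv_apply_eq hinv₂ heig)
  rw [hnorm_rhs, hnorm_lam] at hAη
  calc (inner ℂ η ((H₀ + (a : ℂ) • (1 : 𝓗 →L[ℂ] 𝓗)) η) : ℂ).re
      ≤ ‖η‖ * ‖(H₀ + (a : ℂ) • (1 : 𝓗 →L[ℂ] 𝓗)) η‖ := re_inner_le_norm (𝕜 := ℂ) _ _
    _ ≤ (ε + a) / (1 - lam * γ) := by rwa [hη, one_mul]

/-- If `H₀`, `V` are bounded self-adjoint operators on a complex Hilbert
space, `A = H₀ + a • 1` is positive and invertible (with inverse `Ainv`), `‖V ∘ A⁻¹‖ ≤ γ`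
with `λγ < 1`, and `η` is a unit eigenvector of `H₀ + λ V` with eigenvalue `ε` satisfying
`ε + a ≥ 0`, then `⟪η, (H₀ + a • 1) η⟫ ≤ (ε + a) / (1 - λγ)`. -/
theorem eigenvector_quadratic_form_bound_perturbed
    {𝓗 : Type*} [NormedAddCommGroup 𝓗] [InnerProductSpace ℂ 𝓗] [CompleteSpace 𝓗]
    (H₀ V : 𝓗 →L[ℂ] 𝓗) (hH₀ : IsSelfAdjoint H₀) (hV : IsSelfAdjoint V)
    (a : ℝ)
    (hpos : ∀ ψ : 𝓗, 0 ≤ (inner ℂ ψ ((H₀ + (a : ℂ) • (1 : 𝓗 →L[ℂ] 𝓗)) ψ) : ℂ).re)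
    (Ainv : 𝓗 →L[ℂ] 𝓗)
    (hinv₁ : (H₀ + (a : ℂ) • (1 : 𝓗 →L[ℂ] 𝓗)) ∘L Ainv = 1)
    (hinv₂ : Ainv ∘L (H₀ + (a : ℂ) • (1 : 𝓗 →L[ℂ] 𝓗)) = 1)
    (γ : ℝ) (hγ : 0 ≤ γ) (hVA : ‖V ∘L Ainv‖ ≤ γ)
    (lam : ℝ) (hlam : 0 ≤ lam) (hlamγ : lam * γ < 1)
    (η : 𝓗) (hη : ‖η‖ = 1) (ε : ℝ)
    (heig : (H₀ + (lam : ℂ) • V) η = (ε : ℂ) • η) (hεa : 0 ≤ ε + a) :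
    (inner ℂ η ((H₀ + (a : ℂ) • (1 : 𝓗 →L[ℂ] 𝓗)) η) : ℂ).re ≤ (ε + a) / (1 - lam * γ) :=
  eigenvector_quadratic_form_bound_perturbed_general H₀ V a Ainv hinv₂ γ hVA lam hlam hlamγ η hη ε
    heig hεa
end

section
/- Let (X, μ) be a measure space, p ≥ 1, and let f : ℝ → ℝ be differentiable on (0, ∞) with t^{1−1/p} |f′(t)| ≤ M for all t > 0. Let n₁, n₂ : X → ℝ be integrable functions with values in (0, ∞) almost everywhere. Then ‖f ∘ n₁ − f ∘ n₂‖_{L^p(μ)} ≤ p · M · ‖n₁ − n₂‖_{L¹(μ)}^{1/p}. -/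
/-!
Writing `t = s ^ p`, the hypothesis on `f'` makes `s ↦ f (s ^ p)` Lipschitz with constant `p M`,
so `|f a - f b| ≤ p M |a ^ (1/p) - b ^ (1/p)| ≤ p M |a - b| ^ (1/p)`, the last step because
`x ↦ x ^ (1/p)` is `1/p`-Hölder with constant `1`. Raising this pointwise bound to the power `p` and integrating
turns the `L¹` norm of `n₁ - n₂` into the `p`-th power of the `Lᵖ` bound.
-/

open MeasureTheory Set

theorem abs_rpow_sub_rpow_le {a b z : ℝ} (ha : 0 ≤ a) (hb : 0 ≤ b) (hz₀ : 0 ≤ z) (hz₁ : z ≤ 1) :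
    |a ^ z - b ^ z| ≤ |a - b| ^ z := by
  wlog hba : b ≤ a generalizing a b
  · rw [abs_sub_comm, abs_sub_comm a b]
    exact this hb ha (le_of_not_ge hba)
  have hsub : a ^ z ≤ (a - b) ^ z + b ^ z := by
    simpa using Real.rpow_add_le_add_rpow (sub_nonneg.2 hba) hb hz₀ hz₁
  rw [abs_of_nonneg (sub_nonneg.2 (Real.rpow_le_rpow hb hba hz₀)), abs_of_nonneg (sub_nonneg.2 hba)]
  linarith

theorem abs_sub_le_mul_abs_rpow_sub_rpow {f f' : ℝ → ℝ} {p M : ℝ} (hp : 0 < p)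
    (hf : ∀ t ∈ Ioi (0 : ℝ), HasDerivAt f (f' t) t)
    (hbound : ∀ t : ℝ, 0 < t → t ^ (1 - 1 / p) * |f' t| ≤ M) {a b : ℝ} (ha : 0 < a) (hb : 0 < b) :
    |f a - f b| ≤ p * M * |a ^ (1 / p) - b ^ (1 / p)| := by
  have hderiv : ∀ s ∈ Ioi (0 : ℝ),
      HasDerivWithinAt (fun s => f (s ^ p)) (f' (s ^ p) * (p * s ^ (p - 1))) (Ioi 0) s :=
    fun s hs => ((hf _ (Real.rpow_pos_of_pos hs p)).comp s
      (Real.hasDerivAt_rpow_const (Or.inl (ne_of_gt hs)))).hasDerivWithinAt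
  have hderiv_le : ∀ s ∈ Ioi (0 : ℝ), ‖f' (s ^ p) * (p * s ^ (p - 1))‖ ≤ p * M := by
    intro s (hs : 0 < s)
    have hpow : (s ^ p) ^ (1 - 1 / p) = s ^ (p - 1) := by
      rw [← Real.rpow_mul hs.le]
      congr 1
      field_simp
    have hM := hbound _ (Real.rpow_pos_of_pos hs p)
    rw [hpow] at hM
    calc ‖f' (s ^ p) * (p * s ^ (p - 1))‖ = p * (s ^ (p - 1) * |f' (s ^ p)|) := by
          rw [Real.norm_eq_abs, abs_mul, abs_mul, abs_of_pos hp,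
            abs_of_pos (Real.rpow_pos_of_pos hs _)]
          ring
      _ ≤ p * M := by gcongr
  simpa [Real.rpow_inv_rpow ha.le hp.ne', Real.rpow_inv_rpow hb.le hp.ne'] using
    (convex_Ioi 0).norm_image_sub_le_of_norm_hasDerivWithin_le hderiv hderiv_le
      (Real.rpow_pos_of_pos hb (1 / p)) (Real.rpow_pos_of_pos ha (1 / p))

theorem eLpNorm_le_of_ae_norm_le_mul_norm_rpow {X E F : Type*} [MeasurableSpace X] {μ : Measure X}
    [NormedAddCommGroup E] [NormedAddCommGroup F] {u : X → E} {v : X → F} {p c : ℝ} (hp : 0 < p)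
    (hv : Integrable v μ) (h : ∀ᵐ x ∂μ, ‖u x‖ ≤ c * ‖v x‖ ^ (1 / p)) :
    eLpNorm u (ENNReal.ofReal p) μ ≤ ENNReal.ofReal (c * (∫ x, ‖v x‖ ∂μ) ^ (1 / p)) := by
  have hL1 : eLpNorm (fun x => ‖v x‖ ^ (1 / p)) (ENNReal.ofReal p) μ
      = ENNReal.ofReal (∫ x, ‖v x‖ ∂μ) ^ (1 / p) := by
    rw [eLpNorm_norm_rpow v (by positivity), ← ENNReal.ofReal_mul hp.le,
      mul_one_div_cancel hp.ne', ENNReal.ofReal_one, eLpNorm_one_eq_lintegral_enorm, ofReal_integral_norm_eq_lintegral_enorm hv]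
  calc eLpNorm u (ENNReal.ofReal p) μ
      ≤ ENNReal.ofReal c * eLpNorm (fun x => ‖v x‖ ^ (1 / p)) (ENNReal.ofReal p) μ :=
        eLpNorm_le_mul_eLpNorm_of_ae_le_mul (h.mono fun x hx => by
          rwa [Real.norm_of_nonneg (by positivity)]) _
    _ = ENNReal.ofReal (c * (∫ x, ‖v x‖ ∂μ) ^ (1 / p)) := by
        rw [hL1, ENNReal.ofReal_mul' (by positivity),
          ENNReal.ofReal_rpow_of_nonneg (integral_nonneg fun x => norm_nonneg _) (by positivity)]

theorem xc_potential_Lp_difference_bound_general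
    {X : Type*} [MeasurableSpace X] (μ : Measure X)
    (p : ℝ) (hp : 1 ≤ p) (f f' : ℝ → ℝ)
    (hf : ∀ t ∈ Set.Ioi (0 : ℝ), HasDerivAt f (f' t) t)
    (M : ℝ)
    (hbound : ∀ t : ℝ, 0 < t → t ^ (1 - 1 / p) * |f' t| ≤ M)
    (n₁ n₂ : X → ℝ) (h₁ : Integrable n₁ μ) (h₂ : Integrable n₂ μ)
    (h₁pos : ∀ᵐ x ∂μ, 0 < n₁ x) (h₂pos : ∀ᵐ x ∂μ, 0 < n₂ x) :
    eLpNorm (fun x => f (n₁ x) - f (n₂ x)) (ENNReal.ofReal p) μ ≤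
      ENNReal.ofReal (p * M * (∫ x, |n₁ x - n₂ x| ∂μ) ^ (1 / p)) := by
  have hp₀ : 0 < p := zero_lt_one.trans_le hp
  have hM : 0 ≤ M := (mul_nonneg (by positivity) (abs_nonneg _)).trans (hbound 1 one_pos)
  refine eLpNorm_le_of_ae_norm_le_mul_norm_rpow hp₀ (h₁.sub h₂) ?_
  filter_upwards [h₁pos, h₂pos] with x hx₁ hx₂
  calc ‖f (n₁ x) - f (n₂ x)‖
      ≤ p * M * |n₁ x ^ (1 / p) - n₂ x ^ (1 / p)| :=
        abs_sub_le_mul_abs_rpow_sub_rpow hp₀ hf hbound hx₁ hx₂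
    _ ≤ p * M * ‖n₁ x - n₂ x‖ ^ (1 / p) := by
        gcongr
        exact abs_rpow_sub_rpow_le hx₁.le hx₂.le (by positivity) ((div_le_one hp₀).2 hp)

/-- If `p ≥ 1`, `f` is differentiable on `(0, ∞)` with
`t^(1 - 1/p) · |f' t| ≤ M`, and `n₁, n₂` are integrable with values a.e. in `(0, ∞)`,
then `‖f ∘ n₁ - f ∘ n₂‖_{L^p(μ)} ≤ p · M · ‖n₁ - n₂‖_{L¹(μ)}^(1/p)`. -/
theorem xc_potential_Lp_difference_bound
    {X : Type*} [MeasurableSpace X] (μ : Measure X)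
    (p : ℝ) (hp : 1 ≤ p) (f f' : ℝ → ℝ)
    (hf : ∀ t ∈ Set.Ioi (0 : ℝ), HasDerivAt f (f' t) t)
    (M : ℝ) (hM : 0 ≤ M)
    (hbound : ∀ t : ℝ, 0 < t → t ^ (1 - 1 / p) * |f' t| ≤ M)
    (n₁ n₂ : X → ℝ) (h₁ : Integrable n₁ μ) (h₂ : Integrable n₂ μ)
    (h₁pos : ∀ᵐ x ∂μ, 0 < n₁ x) (h₂pos : ∀ᵐ x ∂μ, 0 < n₂ x) :
    eLpNorm (fun x => f (n₁ x) - f (n₂ x)) (ENNReal.ofReal p) μ ≤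
      ENNReal.ofReal (p * M * (∫ x, |n₁ x - n₂ x| ∂μ) ^ (1 / p)) :=
  xc_potential_Lp_difference_bound_general μ p hp f f' hf M hbound n₁ n₂ h₁ h₂ h₁pos h₂pos
end

section
/- Let (X, μ) be a finite measure space, p ≥ 1, and let f : ℝ → ℝ be differentiable on (0, ∞) with t^{1−1/p} |f′(t)| ≤ M for all t > 0. Let n₁, n₂ : X → ℝ be integrable functions with values in (0, ∞) almost everywhere. Then ‖f ∘ n₁ − f ∘ n₂‖_{L¹(μ)} ≤ p · μ(X)^{1−1/p} · M · ‖n₁ − n₂‖_{L¹(μ)}^{1/p}. -/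
/-!
Substituting `t = s ^ p` turns the weighted bound `t ^ (1 - 1/p) |f' t| ≤ M` into the bound
`p M` on the derivative of `s ↦ f (s ^ p)`. Hence `|f a - f b| ≤ p M |a ^ (1/p) - b ^ (1/p)|`,
and since `t ↦ t ^ (1/p)` is `1/p`-Hölder, `f` is `1/p`-Hölder on `(0, ∞)` with constant `p M`.
Integrating, Hölder's inequality against the constant `1` gives
`∫ |n₁ - n₂| ^ (1/p) ≤ (∫ |n₁ - n₂|) ^ (1/p) μ(X) ^ (1 - 1/p)`.
-/

open MeasureTheory Set

namespace Real

theorem abs_rpow_sub_rpow_le_abs_sub_rpow {a b r : ℝ} (ha : 0 ≤ a) (hb : 0 ≤ b) (hr₀ : 0 ≤ r)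
    (hr₁ : r ≤ 1) : |a ^ r - b ^ r| ≤ |a - b| ^ r := by
  wlog hab : a ≤ b generalizing a b
  · rw [abs_sub_comm, abs_sub_comm a]
    exact this hb ha (le_of_not_ge hab)
  have hmono : a ^ r ≤ b ^ r := rpow_le_rpow ha hab hr₀
  have hsub : b ^ r ≤ (b - a) ^ r + a ^ r := by
    simpa using rpow_add_le_add_rpow (sub_nonneg.2 hab) ha hr₀ hr₁
  rw [abs_sub_comm, abs_of_nonneg (sub_nonneg.2 hmono), abs_sub_comm,
    abs_of_nonneg (sub_nonneg.2 hab)]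
  linarith

end Real

section WeightedDerivativeBound

variable {p M : ℝ} {f f' : ℝ → ℝ}

theorem norm_deriv_comp_rpow_le (hp : 0 < p)
    (hbound : ∀ t : ℝ, 0 < t → t ^ (1 - 1 / p) * |f' t| ≤ M) {s : ℝ} (hs : 0 < s) :
    ‖f' (s ^ p) * (p * s ^ (p - 1))‖ ≤ p * M := by
  have hexp : (s ^ p) ^ (1 - 1 / p) = s ^ (p - 1) := by
    rw [← Real.rpow_mul hs.le]
    congr 1
    field_simp
  calc ‖f' (s ^ p) * (p * s ^ (p - 1))‖
      = p * ((s ^ p) ^ (1 - 1 / p) * |f' (s ^ p)|) := by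
        rw [Real.norm_eq_abs, abs_mul, abs_of_pos (show 0 < p * s ^ (p - 1) by positivity), hexp]
        ring
    _ ≤ p * M := mul_le_mul_of_nonneg_left (hbound _ (by positivity)) hp.le

theorem abs_comp_rpow_sub_comp_rpow_le (hp : 0 < p)
    (hf : ∀ t ∈ Ioi (0 : ℝ), HasDerivAt f (f' t) t)
    (hbound : ∀ t : ℝ, 0 < t → t ^ (1 - 1 / p) * |f' t| ≤ M) {s u : ℝ} (hs : 0 < s) (hu : 0 < u) :
    |f (s ^ p) - f (u ^ p)| ≤ p * M * |s - u| := by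
  have hderiv : ∀ x ∈ Ioi (0 : ℝ),
      HasDerivWithinAt (fun x => f (x ^ p)) (f' (x ^ p) * (p * x ^ (p - 1))) (Ioi 0) x :=
    fun x hx => ((hf _ (Real.rpow_pos_of_pos hx p)).comp x
      (Real.hasDerivAt_rpow_const (Or.inl (ne_of_gt hx)))).hasDerivWithinAt
  exact (convex_Ioi 0).norm_image_sub_le_of_norm_hasDerivWithin_le hderiv
    (fun x hx => norm_deriv_comp_rpow_le hp hbound hx) hu hs

theorem abs_sub_le_of_rpow_mul_abs_deriv_le (hp : 1 ≤ p)
    (hf : ∀ t ∈ Ioi (0 : ℝ), HasDerivAt f (f' t) t) (hM : 0 ≤ M)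
    (hbound : ∀ t : ℝ, 0 < t → t ^ (1 - 1 / p) * |f' t| ≤ M) {a b : ℝ} (ha : 0 < a) (hb : 0 < b) :
    |f a - f b| ≤ p * M * |a - b| ^ (1 / p) := by
  have hp₀ : 0 < p := zero_lt_one.trans_le hp
  have hroot : ∀ {t : ℝ}, 0 ≤ t → (t ^ (1 / p)) ^ p = t := fun ht => by
    rw [one_div, Real.rpow_inv_rpow ht hp₀.ne']
  calc |f a - f b| = |f ((a ^ (1 / p)) ^ p) - f ((b ^ (1 / p)) ^ p)| := by
        rw [hroot ha.le, hroot hb.le]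
    _ ≤ p * M * |a ^ (1 / p) - b ^ (1 / p)| :=
        abs_comp_rpow_sub_comp_rpow_le hp₀ hf hbound (by positivity) (by positivity)
    _ ≤ p * M * |a - b| ^ (1 / p) := by
        gcongr
        exact Real.abs_rpow_sub_rpow_le_abs_sub_rpow ha.le hb.le (by positivity)
          ((div_le_one hp₀).2 hp)

end WeightedDerivativeBound

theorem MeasureTheory.lintegral_enorm_rpow_le {α ε : Type*} [MeasurableSpace α] {μ : Measure α}
    [TopologicalSpace ε] [ContinuousENorm ε] {f : α → ε} (hf : AEStronglyMeasurable f μ)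
    {r : ℝ} (hr₀ : 0 < r) (hr₁ : r ≤ 1) :
    ∫⁻ x, ‖f x‖ₑ ^ r ∂μ ≤ (∫⁻ x, ‖f x‖ₑ ∂μ) ^ r * μ univ ^ (1 - r) := by
  have h := ENNReal.rpow_le_rpow (eLpNorm'_le_eLpNorm'_mul_rpow_measure_univ hr₀ hr₁ hf) hr₀.le
  rw [eLpNorm'_eq_lintegral_enorm, eLpNorm'_eq_lintegral_enorm,
    ENNReal.mul_rpow_of_nonneg _ _ hr₀.le, ← ENNReal.rpow_mul, ← ENNReal.rpow_mul,
    ← ENNReal.rpow_mul, one_div_mul_cancel hr₀.ne'] at h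
  simpa [sub_mul, hr₀.ne'] using h

/-- If `(X, μ)` is a finite measure space, `p ≥ 1`, `f` is differentiable
on `(0, ∞)` with `t^(1 - 1/p) · |f' t| ≤ M`, and `n₁, n₂` are integrable with values a.e.
in `(0, ∞)`, then `‖f ∘ n₁ - f ∘ n₂‖_{L¹(μ)} ≤ p · μ(X)^(1 - 1/p) · M · ‖n₁ - n₂‖_{L¹(μ)}^(1/p)`. -/
theorem xc_potential_L1_difference_bound
    {X : Type*} [MeasurableSpace X] (μ : Measure X) [IsFiniteMeasure μ]
    (p : ℝ) (hp : 1 ≤ p) (f f' : ℝ → ℝ)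
    (hf : ∀ t ∈ Set.Ioi (0 : ℝ), HasDerivAt f (f' t) t)
    (M : ℝ) (hM : 0 ≤ M)
    (hbound : ∀ t : ℝ, 0 < t → t ^ (1 - 1 / p) * |f' t| ≤ M)
    (n₁ n₂ : X → ℝ) (h₁ : Integrable n₁ μ) (h₂ : Integrable n₂ μ)
    (h₁pos : ∀ᵐ x ∂μ, 0 < n₁ x) (h₂pos : ∀ᵐ x ∂μ, 0 < n₂ x) :
    eLpNorm (fun x => f (n₁ x) - f (n₂ x)) 1 μ ≤
      ENNReal.ofReal (p * (μ Set.univ).toReal ^ (1 - 1 / p) * M *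
        (∫ x, |n₁ x - n₂ x| ∂μ) ^ (1 / p)) := by
  have hp₀ : 0 < p := zero_lt_one.trans_le hp
  have hr₀ : 0 ≤ 1 / p := by positivity
  have hr₁ : 1 / p ≤ 1 := (div_le_one hp₀).2 hp
  have hpointwise : ∀ᵐ x ∂μ,
      ‖f (n₁ x) - f (n₂ x)‖ₑ ≤ ENNReal.ofReal (p * M) * ‖n₁ x - n₂ x‖ₑ ^ (1 / p) := by
    filter_upwards [h₁pos, h₂pos] with x hx₁ hx₂
    rw [Real.enorm_eq_ofReal_abs, Real.enorm_eq_ofReal_abs,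
      ENNReal.ofReal_rpow_of_nonneg (abs_nonneg _) hr₀, ← ENNReal.ofReal_mul (by positivity)]
    exact ENNReal.ofReal_le_ofReal (abs_sub_le_of_rpow_mul_abs_deriv_le hp hf hM hbound hx₁ hx₂)
  have hL1 : ∫⁻ x, ‖n₁ x - n₂ x‖ₑ ∂μ = ENNReal.ofReal (∫ x, |n₁ x - n₂ x| ∂μ) :=
    (ofReal_integral_norm_eq_lintegral_enorm (h₁.sub h₂)).symm
  have hμ : μ univ ^ (1 - 1 / p) = ENNReal.ofReal ((μ univ).toReal ^ (1 - 1 / p)) := by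
    rw [← ENNReal.ofReal_rpow_of_nonneg ENNReal.toReal_nonneg (sub_nonneg.2 hr₁),
      ENNReal.ofReal_toReal (measure_ne_top μ univ)]
  calc eLpNorm (fun x => f (n₁ x) - f (n₂ x)) 1 μ
      = ∫⁻ x, ‖f (n₁ x) - f (n₂ x)‖ₑ ∂μ := eLpNorm_one_eq_lintegral_enorm
    _ ≤ ∫⁻ x, ENNReal.ofReal (p * M) * ‖n₁ x - n₂ x‖ₑ ^ (1 / p) ∂μ :=
        lintegral_mono_ae hpointwise
    _ = ENNReal.ofReal (p * M) * ∫⁻ x, ‖n₁ x - n₂ x‖ₑ ^ (1 / p) ∂μ :=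
        lintegral_const_mul' _ _ ENNReal.ofReal_ne_top
    _ ≤ ENNReal.ofReal (p * M) *
          ((∫⁻ x, ‖n₁ x - n₂ x‖ₑ ∂μ) ^ (1 / p) * μ univ ^ (1 - 1 / p)) := by
        gcongr
        exact lintegral_enorm_rpow_le (h₁.sub h₂).aestronglyMeasurable (by positivity) hr₁
    _ = ENNReal.ofReal (p * (μ univ).toReal ^ (1 - 1 / p) * M *
          (∫ x, |n₁ x - n₂ x| ∂μ) ^ (1 / p)) := by
        rw [hL1, hμ, ENNReal.ofReal_rpow_of_nonneg (integral_nonneg fun _ => abs_nonneg _) hr₀,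
          ← ENNReal.ofReal_mul (by positivity), ← ENNReal.ofReal_mul (by positivity)]
        congr 1
        ring
end

section
/- Let δ₁, δ₂, δ₃ be linearly independent vectors in ℝ³, let cell = {α₁δ₁ + α₂δ₂ + α₃δ₃ : 0 ≤ αᵢ ≤ 1}, and let ρ be the diameter of cell. Let r > 2, C ≥ 0, R₀ > 0, and let v : ℝ³ → ℝ be a measurable function such that |v(x − y) − v(x)| ≤ C ‖y‖ ‖x‖^{−(r+1)} whenever ‖x‖ ≥ R₀ and ‖y‖ ≤ ρ. Let Λ = {m ∈ ℤ³ : ‖m₁δ₁ + m₂δ₂ + m₃δ₃‖ ≥ R₀ + 2ρ}, and write R_m = m₁δ₁ + m₂δ₂ + m₃δ₃. Then there exists a constant L, depending only on C, r, ρ, R₀ and the lattice (and not on v, g, or x), such that for every integrable g : ℝ³ → ℝ supported in cell with ∫_cell g = 0 and every x ∈ cell: the family (∫_cell v(x − y − R_m) g(y) dy)_{m ∈ Λ} is summable, and |∑_{m ∈ Λ} ∫_cell v(x − y − R_m) g(y) dy| ≤ L · ‖g‖_{L¹(cell)}. -/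
open MeasureTheory Module Submodule Set

/-! By charge neutrality each term equals `∫_cell (v (x - y - R_m) - v (x - R_m)) g y dy`.
For a far site `‖x - R_m‖ ≥ ‖R_m‖ / 2`, so the decay hypothesis bounds the integrand by
`C ρ 2^(r+1) ‖R_m‖^(-(r+1)) |g y|`, uniformly in `x`; and `∑_m ‖R_m‖^(-(r+1))` converges because
`r + 1 > 3`, the rank of the lattice. -/

theorem Module.Basis.summable_norm_sum_intCast_smul_rpow {ι E : Type*} [Fintype ι]
    [NormedAddCommGroup E] [NormedSpace ℝ E] [FiniteDimensional ℝ E] (b : Basis ι ℝ E)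
    {s : ℝ} (hs : Fintype.card ι < s) :
    Summable fun m : ι → ℤ => ‖∑ i, (m i : ℝ) • b i‖ ^ (-s) := by
  let bℤ := b.restrictScalars ℤ
  have hrank : finrank ℤ (span ℤ (range b)) = Fintype.card ι := finrank_eq_card_basis bℤ
  have hlattice := ZLattice.summable_norm_rpow (span ℤ (range b)) (-s) (by rw [hrank]; linarith)
  refine (hlattice.comp_injective bℤ.equivFun.symm.injective).congr fun m => ?_
  simp [bℤ, Basis.equivFun_symm_apply, Int.cast_smul_eq_zsmul]

theorem isCompact_parallelepiped {ι E : Type*} [Fintype ι] [NormedAddCommGroup E]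
    [NormedSpace ℝ E] (v : ι → E) : IsCompact (parallelepiped v) :=
  isCompact_Icc.image (by fun_prop)

theorem zero_mem_parallelepiped {ι E : Type*} [Fintype ι] [AddCommGroup E]
    [Module ℝ E] (v : ι → E) : 0 ∈ parallelepiped v :=
  (mem_parallelepiped_iff v 0).2 ⟨0, ⟨le_rfl, zero_le_one⟩, by simp⟩

theorem norm_le_diam_parallelepiped {ι E : Type*} [Fintype ι] [NormedAddCommGroup E]
    [NormedSpace ℝ E] (v : ι → E) {z : E} (hz : z ∈ parallelepiped v) :
    ‖z‖ ≤ Metric.diam (parallelepiped v) := by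
  simpa using Metric.dist_le_diam_of_mem (isCompact_parallelepiped v).isBounded hz
    (zero_mem_parallelepiped v)

theorem rpow_neg_le_two_rpow_mul_rpow_neg {a b p : ℝ} (ha : 0 < a) (hab : a / 2 ≤ b)
    (hp : 0 ≤ p) : b ^ (-p) ≤ 2 ^ p * a ^ (-p) :=
  calc b ^ (-p) ≤ (a / 2) ^ (-p) := Real.rpow_le_rpow_of_nonpos (by positivity) hab (by linarith)
    _ = 2 ^ p * a ^ (-p) := by
      rw [Real.div_rpow ha.le zero_le_two, Real.rpow_neg zero_le_two, div_inv_eq_mul, mul_comm]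

theorem abs_setIntegral_mul_le_of_setIntegral_eq_zero {α : Type*} [MeasurableSpace α]
    {μ : Measure α} {s : Set α} (hs : MeasurableSet s) {f g : α → ℝ}
    (hf : AEStronglyMeasurable f (μ.restrict s)) (hg : IntegrableOn g s μ)
    (hg0 : ∫ y in s, g y ∂μ = 0) {a K : ℝ} (hfK : ∀ y ∈ s, |f y - a| ≤ K) :
    |∫ y in s, f y * g y ∂μ| ≤ K * ∫ y in s, |g y| ∂μ := by
  have hbound : ∀ᵐ y ∂μ.restrict s, ‖f y - a‖ ≤ K :=
    (ae_restrict_iff' hs).2 (.of_forall hfK)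
  have hint : IntegrableOn (fun y => (f y - a) * g y) s μ :=
    hg.bdd_mul (hf.sub aestronglyMeasurable_const) hbound
  have hcentered : ∫ y in s, f y * g y ∂μ = ∫ y in s, (f y - a) * g y ∂μ := by
    calc ∫ y in s, f y * g y ∂μ = ∫ y in s, ((f y - a) * g y + a * g y) ∂μ := by
          congr 1; ext y; ring
      _ = ∫ y in s, (f y - a) * g y ∂μ := by
          rw [integral_add hint (hg.const_mul a), integral_const_mul, hg0, mul_zero, add_zero]
  rw [hcentered, ← integral_const_mul K, ← Real.norm_eq_abs]
  refine norm_integral_le_of_norm_le (hg.abs.const_mul K) ?_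
  filter_upwards [hbound] with y hy
  rw [norm_mul, Real.norm_eq_abs (g y)]
  exact mul_le_mul_of_nonneg_right hy (abs_nonneg _)

theorem abs_sub_sub_le_mul_rpow_of_le_norm {E : Type*} [SeminormedAddCommGroup E] {v : E → ℝ}
    {C r R₀ ρ : ℝ} (hC : 0 ≤ C) (hr : -1 ≤ r) (hR₀ : 0 < R₀)
    (hv : ∀ x y : E, R₀ ≤ ‖x‖ → ‖y‖ ≤ ρ → |v (x - y) - v x| ≤ C * ‖y‖ * ‖x‖ ^ (-(r + 1)))
    {x y R : E} (hx : ‖x‖ ≤ ρ) (hy : ‖y‖ ≤ ρ) (hR : R₀ + 2 * ρ ≤ ‖R‖) :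
    |v (x - y - R) - v (x - R)| ≤ C * ρ * 2 ^ (r + 1) * ‖R‖ ^ (-(r + 1)) := by
  have hxR : ‖R‖ - ρ ≤ ‖x - R‖ := by
    linarith [norm_sub_norm_le R x, norm_sub_rev R x]
  have hρ : 0 ≤ ρ := (norm_nonneg x).trans hx
  calc |v (x - y - R) - v (x - R)| = |v (x - R - y) - v (x - R)| := by rw [sub_right_comm]
    _ ≤ C * ‖y‖ * ‖x - R‖ ^ (-(r + 1)) := hv _ _ (by linarith) hy
    _ ≤ C * ρ * (2 ^ (r + 1) * ‖R‖ ^ (-(r + 1))) := by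
      gcongr
      exact rpow_neg_le_two_rpow_mul_rpow_neg (by linarith) (by linarith) (by linarith)
    _ = C * ρ * 2 ^ (r + 1) * ‖R‖ ^ (-(r + 1)) := by ring

/-- Uniform bound on the long-range part of the Hartree potential.  If the
interaction `v` satisfies the difference estimate
`|v (x - y) - v x| ≤ C ‖y‖ ‖x‖^(-(r+1))` for `‖x‖ ≥ R₀`, `‖y‖ ≤ ρ` (`ρ` = diameter of
the unit cell), then there is a constant `L` such that for every integrable `g`
supported in the unit cell with `∫_cell g = 0` and every `x` in the cell, the lattice
sum `∑_{m ∈ Λ} ∫_cell v (x - y - R_m) g y dy` over the far sites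
`Λ = {m : ‖R_m‖ ≥ R₀ + 2ρ}` converges and is bounded by `L ‖g‖_{L¹(cell)}`. -/
theorem hartree_long_range_bound
    (δ : Fin 3 → EuclideanSpace ℝ (Fin 3)) (hδ : LinearIndependent ℝ δ)
    (cell : Set (EuclideanSpace ℝ (Fin 3)))
    (hcell : cell = {x | ∃ α : Fin 3 → ℝ, (∀ i, α i ∈ Set.Icc (0 : ℝ) 1) ∧
      x = ∑ i, α i • δ i})
    (ρ : ℝ) (hρ : ρ = Metric.diam cell)
    (r : ℝ) (hr : 2 < r) (C : ℝ) (hC : 0 ≤ C) (R₀ : ℝ) (hR₀ : 0 < R₀)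
    (v : EuclideanSpace ℝ (Fin 3) → ℝ) (hv_meas : Measurable v)
    (hv : ∀ x y : EuclideanSpace ℝ (Fin 3), R₀ ≤ ‖x‖ → ‖y‖ ≤ ρ →
      |v (x - y) - v x| ≤ C * ‖y‖ * ‖x‖ ^ (-(r + 1))) :
    ∃ L : ℝ, ∀ g : EuclideanSpace ℝ (Fin 3) → ℝ, Integrable g volume →
      (∀ x ∉ cell, g x = 0) → (∫ y in cell, g y) = 0 →
      ∀ x ∈ cell,
        Summable (fun m : {m : Fin 3 → ℤ // R₀ + 2 * ρ ≤ ‖∑ i, ((m i : ℝ)) • δ i‖} =>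
          ∫ y in cell, v (x - y - ∑ i, ((m.1 i : ℝ)) • δ i) * g y) ∧
        |∑' m : {m : Fin 3 → ℤ // R₀ + 2 * ρ ≤ ‖∑ i, ((m i : ℝ)) • δ i‖},
            ∫ y in cell, v (x - y - ∑ i, ((m.1 i : ℝ)) • δ i) * g y| ≤
          L * ∫ y in cell, |g y| := by
  obtain rfl : cell = parallelepiped δ := by
    ext x
    simp [hcell, mem_parallelepiped_iff, Pi.le_def, forall_and]
  set R : (Fin 3 → ℤ) → EuclideanSpace ℝ (Fin 3) := fun m => ∑ i, (m i : ℝ) • δ i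
  have hsummable : Summable fun m => ‖R m‖ ^ (-(r + 1)) := by
    have hcard : Fintype.card (Fin 3) = finrank ℝ (EuclideanSpace ℝ (Fin 3)) := by simp
    simpa [coe_basisOfLinearIndependentOfCardEqFinrank] using
      (basisOfLinearIndependentOfCardEqFinrank hδ hcard).summable_norm_sum_intCast_smul_rpow
        (s := r + 1) (by rw [Fintype.card_fin, Nat.cast_ofNat]; linarith)
  have hnorm : ∀ z ∈ parallelepiped δ, ‖z‖ ≤ ρ := fun z hz =>
    hρ ▸ norm_le_diam_parallelepiped δ hz
  set c := C * ρ * 2 ^ (r + 1)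
  refine ⟨c * ∑' m, ‖R m‖ ^ (-(r + 1)), fun g hg _ hg0 x hx => ?_⟩
  set I := ∫ y in parallelepiped δ, |g y|
  have hsite : ∀ m : {m // R₀ + 2 * ρ ≤ ‖R m‖},
      ‖∫ y in parallelepiped δ, v (x - y - R m) * g y‖ ≤ c * I * ‖R m‖ ^ (-(r + 1)) := by
    intro m
    rw [Real.norm_eq_abs, mul_right_comm]
    exact abs_setIntegral_mul_le_of_setIntegral_eq_zero
      (isCompact_parallelepiped δ).measurableSet
      (hv_meas.comp (by fun_prop)).aestronglyMeasurable hg.integrableOn hg0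
      fun y hy => abs_sub_sub_le_mul_rpow_of_le_norm hC (by linarith) hR₀ hv (hnorm x hx)
        (hnorm y hy) m.2
  have hmajorant : Summable fun m : {m // R₀ + 2 * ρ ≤ ‖R m‖} => c * I * ‖R m‖ ^ (-(r + 1)) :=
    (hsummable.subtype _).mul_left _
  refine ⟨hmajorant.of_norm_bounded hsite, ?_⟩
  calc _ ≤ ∑' m : {m // R₀ + 2 * ρ ≤ ‖R m‖}, c * I * ‖R m‖ ^ (-(r + 1)) :=
        tsum_of_norm_bounded hmajorant.hasSum hsite
    _ = c * (∑' m : {m // R₀ + 2 * ρ ≤ ‖R m‖}, ‖R m‖ ^ (-(r + 1))) * I := by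
      rw [tsum_mul_left]; ring
    _ ≤ (c * ∑' m, ‖R m‖ ^ (-(r + 1))) * I := by
      have hρ0 : 0 ≤ ρ := (norm_nonneg x).trans (hnorm x hx)
      gcongr
      exact hsummable.tsum_subtype_le _ _ fun m => by positivity
end
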